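/- Let k be a field of characteristic ≠ 2 and let B = k⟨y₁, y₂⟩/(y₁², y₂², y₁y₂ + y₂y₁) be the 4-dimensional quantum symmetric algebra. Let A = B ⋊ k⟨g⟩ with g² = 1 and g·yᵢ·g⁻¹ = −yᵢ. Then A is isomorphic to A' = k[x₁, x₂]/(x₁², x₂²) ⋊ k⟨g⟩ with g² = 1 and g·xᵢ·g⁻¹ = −xᵢ, via an isomorphism sending y₁ ↦ x₁ and y₂ ↦ g·x₂ (i.e., the substitution x₁ = y₁, x₂ = g·y₂). -/
import Mathlib


/-!
STATEMENT 10: the smash product `k⟨y₁,y₂⟩/(y₁², y₂², y₁y₂+y₂y₁) ⋊ k⟨g⟩` (with `g² = 1`,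
`g yᵢ g⁻¹ = -yᵢ`) is isomorphic to `k[x₁,x₂]/(x₁², x₂²) ⋊ k⟨g⟩` via `y₁ ↦ x₁`,
`y₂ ↦ g·x₂`, `g ↦ g`.  Both smash products are realized by their presentations.
-/

inductive AGen : Type | y1 | y2 | g

open FreeAlgebra in
/-- Relations for `A = k⟨y₁,y₂⟩/(y₁²,y₂²,y₁y₂+y₂y₁) ⋊ k⟨g⟩`, `g²=1`, `g yᵢ g⁻¹ = -yᵢ`. -/
inductive ARel (k : Type) [Field k] : FreeAlgebra k AGen → FreeAlgebra k AGen → Prop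
  | y1y1 : ARel k (ι k AGen.y1 * ι k AGen.y1) 0
  | y2y2 : ARel k (ι k AGen.y2 * ι k AGen.y2) 0
  | anti : ARel k (ι k AGen.y1 * ι k AGen.y2 + ι k AGen.y2 * ι k AGen.y1) 0
  | gg : ARel k (ι k AGen.g * ι k AGen.g) 1
  | gy1 : ARel k (ι k AGen.g * ι k AGen.y1) (-(ι k AGen.y1 * ι k AGen.g))
  | gy2 : ARel k (ι k AGen.g * ι k AGen.y2) (-(ι k AGen.y2 * ι k AGen.g))

open FreeAlgebra in
/-- Relations for `A' = k[x₁,x₂]/(x₁²,x₂²) ⋊ k⟨g⟩`, `g²=1`, `g xᵢ g⁻¹ = -xᵢ`. -/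
inductive A'Rel (k : Type) [Field k] : FreeAlgebra k AGen → FreeAlgebra k AGen → Prop
  | x1x1 : A'Rel k (ι k AGen.y1 * ι k AGen.y1) 0
  | x2x2 : A'Rel k (ι k AGen.y2 * ι k AGen.y2) 0
  | comm : A'Rel k (ι k AGen.y1 * ι k AGen.y2) (ι k AGen.y2 * ι k AGen.y1)
  | gg : A'Rel k (ι k AGen.g * ι k AGen.g) 1
  | gx1 : A'Rel k (ι k AGen.g * ι k AGen.y1) (-(ι k AGen.y1 * ι k AGen.g))
  | gx2 : A'Rel k (ι k AGen.g * ι k AGen.y2) (-(ι k AGen.y2 * ι k AGen.g))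

abbrev AAlg (k : Type) [Field k] : Type := RingQuot (ARel k)
abbrev A'Alg (k : Type) [Field k] : Type := RingQuot (A'Rel k)

noncomputable def Ay1 (k : Type) [Field k] : AAlg k :=
  RingQuot.mkAlgHom k (ARel k) (FreeAlgebra.ι k AGen.y1)
noncomputable def Ay2 (k : Type) [Field k] : AAlg k :=
  RingQuot.mkAlgHom k (ARel k) (FreeAlgebra.ι k AGen.y2)
noncomputable def Ag (k : Type) [Field k] : AAlg k :=
  RingQuot.mkAlgHom k (ARel k) (FreeAlgebra.ι k AGen.g)
noncomputable def A'x1 (k : Type) [Field k] : A'Alg k :=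
  RingQuot.mkAlgHom k (A'Rel k) (FreeAlgebra.ι k AGen.y1)
noncomputable def A'x2 (k : Type) [Field k] : A'Alg k :=
  RingQuot.mkAlgHom k (A'Rel k) (FreeAlgebra.ι k AGen.y2)
noncomputable def A'g (k : Type) [Field k] : A'Alg k :=
  RingQuot.mkAlgHom k (A'Rel k) (FreeAlgebra.ι k AGen.g)


section Aux
variable {R : Type*} [Ring R]

private lemma L1 (a b : R) (h : a*b = -(b*a)) (hb : b*b = 0) : (a*b)*(a*b) = 0 := by
  have e1 : (a*b)*(a*b) = a*((b*a)*b) := by noncomm_ring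
  have e2 : b*a = -(a*b) := by rw [h, neg_neg]
  rw [e1, e2]
  have e3 : a*((-(a*b))*b) = -((a*a)*(b*b)) := by noncomm_ring
  rw [e3, hb, mul_zero, neg_zero]

private lemma L2 (a b c : R) (h : b*a = -(a*b)) (hc : a*c = c*a) :
    a*(b*c) + (b*c)*a = 0 := by
  have h2 : a*b = -(b*a) := by rw [h, neg_neg]
  have e1 : a*(b*c) = (a*b)*c := by noncomm_ring
  calc a*(b*c) + (b*c)*a = (-(b*a))*c + (b*c)*a := by rw [e1, h2]
    _ = -(b*(a*c)) + (b*c)*a := by noncomm_ring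
    _ = -(b*(c*a)) + (b*c)*a := by rw [hc]
    _ = 0 := by noncomm_ring

private lemma L3 (a b : R) (hgg : a*a = 1) (h : a*b = -(b*a)) :
    a*(a*b) = -((a*b)*a) := by
  have e1 : a*(a*b) = (a*a)*b := by noncomm_ring
  have e2 : -((a*b)*a) = b := by
    rw [h]
    have : (-(b*a))*a = -(b*(a*a)) := by noncomm_ring
    rw [this, hgg, mul_one, neg_neg]
  rw [e1, hgg, one_mul, e2]

private lemma L4 (a b c : R) (h : b*a = -(a*b)) (hc : a*c + c*a = 0) :
    a*(b*c) = (b*c)*a := by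
  have h2 : a*b = -(b*a) := by rw [h, neg_neg]
  have hc2 : a*c = -(c*a) := by
    rw [eq_neg_iff_add_eq_zero]; exact hc
  calc a*(b*c) = (a*b)*c := by noncomm_ring
    _ = (-(b*a))*c := by rw [h2]
    _ = -(b*(a*c)) := by noncomm_ring
    _ = -(b*(-(c*a))) := by rw [hc2]
    _ = (b*c)*a := by noncomm_ring

end Aux

section Maps
variable (k : Type) [Field k]

open FreeAlgebra RingQuot

-- relations in A'Alg
private lemma hx1x1 : A'x1 k * A'x1 k = 0 := by
  have := RingQuot.mkAlgHom_rel k (A'Rel.x1x1 (k := k))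
  simpa [A'x1, map_mul] using this
private lemma hx2x2 : A'x2 k * A'x2 k = 0 := by
  have := RingQuot.mkAlgHom_rel k (A'Rel.x2x2 (k := k))
  simpa [A'x2, map_mul] using this
private lemma hxcomm : A'x1 k * A'x2 k = A'x2 k * A'x1 k := by
  have := RingQuot.mkAlgHom_rel k (A'Rel.comm (k := k))
  simpa [A'x1, A'x2, map_mul] using this
private lemma hgg' : A'g k * A'g k = 1 := by
  have := RingQuot.mkAlgHom_rel k (A'Rel.gg (k := k))
  simpa [A'g, map_mul] using this
private lemma hgx1 : A'g k * A'x1 k = -(A'x1 k * A'g k) := by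
  have := RingQuot.mkAlgHom_rel k (A'Rel.gx1 (k := k))
  simpa [A'g, A'x1, map_mul] using this
private lemma hgx2 : A'g k * A'x2 k = -(A'x2 k * A'g k) := by
  have := RingQuot.mkAlgHom_rel k (A'Rel.gx2 (k := k))
  simpa [A'g, A'x2, map_mul] using this

-- relations in AAlg
private lemma hy1y1 : Ay1 k * Ay1 k = 0 := by
  have := RingQuot.mkAlgHom_rel k (ARel.y1y1 (k := k))
  simpa [Ay1, map_mul] using this
private lemma hy2y2 : Ay2 k * Ay2 k = 0 := by
  have := RingQuot.mkAlgHom_rel k (ARel.y2y2 (k := k))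
  simpa [Ay2, map_mul] using this
private lemma hanti : Ay1 k * Ay2 k + Ay2 k * Ay1 k = 0 := by
  have := RingQuot.mkAlgHom_rel k (ARel.anti (k := k))
  simpa [Ay1, Ay2, map_mul, map_add] using this
private lemma hgg : Ag k * Ag k = 1 := by
  have := RingQuot.mkAlgHom_rel k (ARel.gg (k := k))
  simpa [Ag, map_mul] using this
private lemma hgy1 : Ag k * Ay1 k = -(Ay1 k * Ag k) := by
  have := RingQuot.mkAlgHom_rel k (ARel.gy1 (k := k))
  simpa [Ag, Ay1, map_mul] using this
private lemma hgy2 : Ag k * Ay2 k = -(Ay2 k * Ag k) := by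
  have := RingQuot.mkAlgHom_rel k (ARel.gy2 (k := k))
  simpa [Ag, Ay2, map_mul] using this

noncomputable def fwdGen : AGen → A'Alg k
  | AGen.y1 => A'x1 k
  | AGen.y2 => A'g k * A'x2 k
  | AGen.g => A'g k

noncomputable def bwdGen : AGen → AAlg k
  | AGen.y1 => Ay1 k
  | AGen.y2 => Ag k * Ay2 k
  | AGen.g => Ag k

noncomputable def fwd : AAlg k →ₐ[k] A'Alg k :=
  RingQuot.liftAlgHom k ⟨FreeAlgebra.lift k (fwdGen k), by
    intro x y h
    induction h with
    | y1y1 => simp [FreeAlgebra.lift_ι_apply, fwdGen]; exact hx1x1 k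
    | y2y2 =>
        simp only [map_mul, map_zero, FreeAlgebra.lift_ι_apply, fwdGen]
        exact L1 _ _ (hgx2 k) (hx2x2 k)
    | anti =>
        simp only [map_mul, map_add, map_zero, FreeAlgebra.lift_ι_apply, fwdGen]
        exact L2 _ _ _ (hgx1 k) (hxcomm k)
    | gg => simp [FreeAlgebra.lift_ι_apply, fwdGen]; exact hgg' k
    | gy1 =>
        simp only [map_mul, map_neg, FreeAlgebra.lift_ι_apply, fwdGen]
        exact hgx1 k
    | gy2 =>
        simp only [map_mul, map_neg, FreeAlgebra.lift_ι_apply, fwdGen]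
        exact L3 _ _ (hgg' k) (hgx2 k)⟩

noncomputable def bwd : A'Alg k →ₐ[k] AAlg k :=
  RingQuot.liftAlgHom k ⟨FreeAlgebra.lift k (bwdGen k), by
    intro x y h
    induction h with
    | x1x1 => simp [FreeAlgebra.lift_ι_apply, bwdGen]; exact hy1y1 k
    | x2x2 =>
        simp only [map_mul, map_zero, FreeAlgebra.lift_ι_apply, bwdGen]
        exact L1 _ _ (hgy2 k) (hy2y2 k)
    | comm =>
        simp only [map_mul, FreeAlgebra.lift_ι_apply, bwdGen]
        exact L4 _ _ _ (hgy1 k) (hanti k)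
    | gg => simp [FreeAlgebra.lift_ι_apply, bwdGen]; exact hgg k
    | gx1 =>
        simp only [map_mul, map_neg, FreeAlgebra.lift_ι_apply, bwdGen]
        exact hgy1 k
    | gx2 =>
        simp only [map_mul, map_neg, FreeAlgebra.lift_ι_apply, bwdGen]
        exact L3 _ _ (hgg k) (hgy2 k)⟩

private lemma fwd_Ay1 : fwd k (Ay1 k) = A'x1 k := by
  simp [fwd, Ay1, RingQuot.liftAlgHom_mkAlgHom_apply, FreeAlgebra.lift_ι_apply, fwdGen]
private lemma fwd_Ay2 : fwd k (Ay2 k) = A'g k * A'x2 k := by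
  simp [fwd, Ay2, RingQuot.liftAlgHom_mkAlgHom_apply, FreeAlgebra.lift_ι_apply, fwdGen]
private lemma fwd_Ag : fwd k (Ag k) = A'g k := by
  simp [fwd, Ag, RingQuot.liftAlgHom_mkAlgHom_apply, FreeAlgebra.lift_ι_apply, fwdGen]
private lemma bwd_x1 : bwd k (A'x1 k) = Ay1 k := by
  simp [bwd, A'x1, RingQuot.liftAlgHom_mkAlgHom_apply, FreeAlgebra.lift_ι_apply, bwdGen]
private lemma bwd_x2 : bwd k (A'x2 k) = Ag k * Ay2 k := by
  simp [bwd, A'x2, RingQuot.liftAlgHom_mkAlgHom_apply, FreeAlgebra.lift_ι_apply, bwdGen]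
private lemma bwd_g : bwd k (A'g k) = Ag k := by
  simp [bwd, A'g, RingQuot.liftAlgHom_mkAlgHom_apply, FreeAlgebra.lift_ι_apply, bwdGen]

private lemma fwd_bwd : (fwd k).comp (bwd k) = AlgHom.id k (A'Alg k) := by
  apply RingQuot.ringQuot_ext'
  apply FreeAlgebra.hom_ext
  funext t
  cases t with
  | y1 =>
      show (fwd k) ((bwd k) (A'x1 k)) = A'x1 k
      rw [bwd_x1, fwd_Ay1]
  | y2 =>
      show (fwd k) ((bwd k) (A'x2 k)) = A'x2 k
      rw [bwd_x2, map_mul, fwd_Ag, fwd_Ay2, ← mul_assoc, hgg', one_mul]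
  | g =>
      show (fwd k) ((bwd k) (A'g k)) = A'g k
      rw [bwd_g, fwd_Ag]

private lemma bwd_fwd : (bwd k).comp (fwd k) = AlgHom.id k (AAlg k) := by
  apply RingQuot.ringQuot_ext'
  apply FreeAlgebra.hom_ext
  funext t
  cases t with
  | y1 =>
      show (bwd k) ((fwd k) (Ay1 k)) = Ay1 k
      rw [fwd_Ay1, bwd_x1]
  | y2 =>
      show (bwd k) ((fwd k) (Ay2 k)) = Ay2 k
      rw [fwd_Ay2, map_mul, bwd_g, bwd_x2, ← mul_assoc, hgg, one_mul]
  | g =>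
      show (bwd k) ((fwd k) (Ag k)) = Ag k
      rw [fwd_Ag, bwd_g]

end Maps

theorem AAlg_iso_A'Alg (k : Type) [Field k] (h2 : (2 : k) ≠ 0) :
    ∃ φ : AAlg k ≃ₐ[k] A'Alg k,
      φ (Ay1 k) = A'x1 k ∧ φ (Ay2 k) = A'g k * A'x2 k ∧ φ (Ag k) = A'g k := by
  refine ⟨AlgEquiv.ofAlgHom (fwd k) (bwd k) (fwd_bwd k) (bwd_fwd k), ?_, ?_, ?_⟩
  · exact fwd_Ay1 k
  · exact fwd_Ay2 k
  · exact fwd_Ag k
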